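/- arXiv:0707.3619 — 4 statements merged into one kernel-verified Lean document; each statement's English description precedes it below -/
import Mathlib

section
/- The set of n×n simple unit-Monge matrices is closed under distance multiplication: if P_A, P_B are n×n permutation matrices and C = P_A^Σ ⊙ P_B^Σ (distance product), then there exists an n×n permutation matrix P_C with C = P_C^Σ. -/
/-- The permutation matrix of a permutation `σ` (rows and columns indexed by
odd half-integers `⟨0:n⟩`, represented by `Fin n`). -/
def PermMat {n : ℕ} (σ : Equiv.Perm (Fin n)) : Fin n → Fin n → ℤ :=
  fun i j => if σ i = j then 1 else 0

def distSum {m n : ℕ} (D : Fin m → Fin n → ℤ) (i : Fin (m+1)) (j : Fin (n+1)) : ℤ :=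
  ∑ p : Fin m, ∑ q : Fin n, if (i : ℕ) ≤ (p : ℕ) ∧ (q : ℕ) < (j : ℕ) then D p q else 0

def distProd {n : ℕ} (A B : Fin (n+1) → Fin (n+1) → ℤ) (i k : Fin (n+1)) : ℤ :=
  Finset.univ.inf' Finset.univ_nonempty (fun j => A i j + B j k)

/-!
Let `C` be the min-plus product of `P_A^Σ` and `P_B^Σ`. Exchanging the optimal middle indices of
two entries shows that `C` inherits the Monge property of its factors, and comparing with the
middle index `0` or `n` shows that its first and last rows and columns are those of a distribution
matrix. The cross differences of `C` are therefore nonnegative integers with unit row and column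
sums, i.e. a permutation matrix `P_C`, and summing them back recovers `C = P_C^Σ`.
-/

open Finset

theorem Fin.sum_ite_val_lt {M : Type*} [AddCommMonoid M] {n k : ℕ} (f : ℕ → M)
    (hk : k ≤ n) :
    (∑ q : Fin n, if (q : ℕ) < k then f q else 0) = ∑ q ∈ range k, f q := by
  rw [Fin.sum_univ_eq_sum_range (fun q => if q < k then f q else 0), ← sum_filter]
  congr 1
  ext q
  simp only [mem_filter, mem_range]
  omega

theorem Fin.sum_ite_le_val {M : Type*} [AddCommMonoid M] {n : ℕ} (i : ℕ) (f : ℕ → M) :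
    (∑ p : Fin n, if i ≤ (p : ℕ) then f p else 0) = ∑ p ∈ Ico i n, f p := by
  rw [Fin.sum_univ_eq_sum_range (fun p => if i ≤ p then f p else 0), ← sum_filter]
  congr 1
  ext p
  simp only [mem_filter, mem_range, mem_Ico]
  omega

def distFun {m n : ℕ} (D : Fin m → Fin n → ℤ) (i j : ℕ) : ℤ :=
  ∑ p : Fin m, ∑ q : Fin n, if i ≤ (p : ℕ) ∧ (q : ℕ) < j then D p q else 0

section distFun

variable {m n : ℕ}

theorem distFun_zero_right (D : Fin m → Fin n → ℤ) (i : ℕ) : distFun D i 0 = 0 := by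
  simp [distFun]

theorem distFun_of_le_left (D : Fin m → Fin n → ℤ) {i : ℕ} (hi : m ≤ i) (j : ℕ) :
    distFun D i j = 0 :=
  sum_eq_zero fun p _ => sum_eq_zero fun q _ => if_neg (by omega)

theorem distFun_add_le (D : Fin m → Fin n → ℤ) (hD : ∀ p q, 0 ≤ D p q) {i i' j j' : ℕ}
    (hi : i ≤ i') (hj : j ≤ j') :
    distFun D i j + distFun D i' j' ≤ distFun D i j' + distFun D i' j := by
  simp only [distFun, ← sum_add_distrib]
  refine sum_le_sum fun p _ => sum_le_sum fun q _ => ?_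
  have := hD p q
  split_ifs <;> omega

theorem distFun_permMat (σ : Equiv.Perm (Fin n)) (i j : ℕ) :
    distFun (PermMat σ) i j =
      ∑ p : Fin n, if i ≤ (p : ℕ) ∧ (σ p : ℕ) < j then 1 else 0 := by
  refine sum_congr rfl fun p _ => ?_
  rw [Fintype.sum_eq_single (σ p) fun q hq => by simp [PermMat, Ne.symm hq]]
  simp [PermMat]

theorem distFun_permMat_zero_left (σ : Equiv.Perm (Fin n)) {j : ℕ} (hj : j ≤ n) :
    distFun (PermMat σ) 0 j = j := by
  rw [distFun_permMat]
  simp only [zero_le, true_and]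
  rw [Equiv.sum_comp σ (fun q => if (q : ℕ) < j then (1 : ℤ) else 0),
    Fin.sum_ite_val_lt (fun _ => (1 : ℤ)) hj]
  simp

theorem distFun_permMat_right (σ : Equiv.Perm (Fin n)) {i : ℕ} (hi : i ≤ n) :
    distFun (PermMat σ) i n = n - i := by
  rw [distFun_permMat]
  simp only [(σ _).is_lt, and_true]
  rw [Fin.sum_ite_le_val i fun _ => (1 : ℤ)]
  simp [hi]

end distFun

def IsMongeOn (n : ℕ) (C : ℕ → ℕ → ℤ) : Prop :=
  ∀ ⦃i i' j j' : ℕ⦄, i ≤ i' → i' ≤ n → j ≤ j' → j' ≤ n →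
    C i j + C i' j' ≤ C i j' + C i' j

def minPlus (n : ℕ) (A B : ℕ → ℕ → ℤ) (i k : ℕ) : ℤ :=
  univ.inf' univ_nonempty fun j : Fin (n + 1) => A i j + B j k

section minPlus

variable {n : ℕ} {A B : ℕ → ℕ → ℤ}

theorem minPlus_le {i j k : ℕ} (hj : j ≤ n) : minPlus n A B i k ≤ A i j + B j k :=
  inf'_le _ (mem_univ (⟨j, by omega⟩ : Fin (n + 1)))

theorem le_minPlus {i k : ℕ} {x : ℤ} (h : ∀ j ≤ n, x ≤ A i j + B j k) :
    x ≤ minPlus n A B i k :=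
  le_inf' _ _ fun j _ => h j j.is_le

theorem exists_minPlus_eq (n : ℕ) (A B : ℕ → ℕ → ℤ) (i k : ℕ) :
    ∃ j ≤ n, minPlus n A B i k = A i j + B j k := by
  obtain ⟨j, -, hj⟩ := exists_mem_eq_inf' univ_nonempty fun j : Fin (n + 1) => A i j + B j k
  exact ⟨j, j.is_le, hj⟩

theorem IsMongeOn.minPlus (hA : IsMongeOn n A) (hB : IsMongeOn n B) :
    IsMongeOn n (minPlus n A B) := by
  intro i i' k k' hi hi' hk hk'
  obtain ⟨j, hj, hCj⟩ := exists_minPlus_eq n A B i k'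
  obtain ⟨j', hj', hCj'⟩ := exists_minPlus_eq n A B i' k
  rw [hCj, hCj']
  -- the optimal middle indices for `(i, k')` and `(i', k)` are exchanged
  rcases le_total j j' with hjj' | hj'j
  · have h₁ : _root_.minPlus n A B i k ≤ A i j + B j k := minPlus_le hj
    have h₂ : _root_.minPlus n A B i' k' ≤ A i' j' + B j' k' := minPlus_le hj'
    linarith [hB hjj' hj' hk hk']
  · have h₁ : _root_.minPlus n A B i k ≤ A i j' + B j' k := minPlus_le hj'
    have h₂ : _root_.minPlus n A B i' k' ≤ A i' j + B j k' := minPlus_le hj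
    linarith [hA hi hi' hj'j hj]

end minPlus

/-- Integer Monge matrices on `[0:n | 0:n]` with the boundary values of a distribution matrix;
these are exactly the simple unit-Monge matrices `P^Σ`. -/
structure IsSimpleUnitMonge (n : ℕ) (C : ℕ → ℕ → ℤ) : Prop where
  monge : IsMongeOn n C
  col_zero : ∀ i ≤ n, C i 0 = 0
  row_last : ∀ j ≤ n, C n j = 0
  row_zero : ∀ j ≤ n, C 0 j = j
  col_last : ∀ i ≤ n, C i n = n - i

namespace IsSimpleUnitMonge

variable {n : ℕ} {C A B : ℕ → ℕ → ℤ}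

theorem sub_le (hC : IsSimpleUnitMonge n C) {i j : ℕ} (hi : i ≤ n) (hj : j ≤ n) :
    (j : ℤ) - i ≤ C i j := by
  have := hC.monge (Nat.zero_le i) hi hj le_rfl
  rw [hC.row_zero j hj, hC.row_zero n le_rfl, hC.col_last i hi] at this
  linarith

theorem nonneg (hC : IsSimpleUnitMonge n C) {i j : ℕ} (hi : i ≤ n) (hj : j ≤ n) :
    0 ≤ C i j := by
  have := hC.monge hi le_rfl (Nat.zero_le j) hj
  rw [hC.col_zero i hi, hC.row_last j hj, hC.row_last 0 (Nat.zero_le n)] at this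
  linarith

theorem minPlus (hA : IsSimpleUnitMonge n A) (hB : IsSimpleUnitMonge n B) :
    IsSimpleUnitMonge n (minPlus n A B) where
  monge := hA.monge.minPlus hB.monge
  col_zero i hi := le_antisymm
    ((minPlus_le (j := 0) (Nat.zero_le n)).trans_eq
      (by rw [hA.col_zero i hi, hB.col_zero 0 (Nat.zero_le n), add_zero]))
    (le_minPlus fun j hj => add_nonneg (hA.nonneg hi hj) (hB.nonneg hj (Nat.zero_le n)))
  row_last k hk := le_antisymm
    ((minPlus_le (j := n) le_rfl).trans_eq
      (by rw [hA.row_last n le_rfl, hB.row_last k hk, add_zero]))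
    (le_minPlus fun j hj => add_nonneg (hA.nonneg le_rfl hj) (hB.nonneg hj hk))
  row_zero k hk := le_antisymm
    ((minPlus_le (j := 0) (Nat.zero_le n)).trans_eq
      (by rw [hA.row_zero 0 (Nat.zero_le n), hB.row_zero k hk, Nat.cast_zero, zero_add]))
    (le_minPlus fun j hj => by linarith [hA.row_zero j hj, hB.sub_le hj hk])
  col_last i hi := le_antisymm
    ((minPlus_le (j := n) le_rfl).trans_eq
      (by rw [hA.col_last i hi, hB.row_last n le_rfl, add_zero]))
    (le_minPlus fun j hj => by linarith [hB.col_last j hj, hA.sub_le hi hj])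

end IsSimpleUnitMonge

theorem isSimpleUnitMonge_distFun_permMat {n : ℕ} (σ : Equiv.Perm (Fin n)) :
    IsSimpleUnitMonge n (distFun (PermMat σ)) where
  monge _ _ _ _ hi _ hj _ := distFun_add_le _ (fun _ _ => by unfold PermMat; positivity) hi hj
  col_zero i _ := distFun_zero_right _ i
  row_last j _ := distFun_of_le_left _ le_rfl j
  row_zero _ hj := distFun_permMat_zero_left σ hj
  col_last _ hi := distFun_permMat_right σ hi

def crossDiff (C : ℕ → ℕ → ℤ) (p q : ℕ) : ℤ :=
  C p (q + 1) - C p q - C (p + 1) (q + 1) + C (p + 1) q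

theorem sum_range_crossDiff_right (C : ℕ → ℕ → ℤ) (p k : ℕ) :
    ∑ q ∈ range k, crossDiff C p q = (C p k - C (p + 1) k) - (C p 0 - C (p + 1) 0) := by
  rw [← sum_range_sub fun q => C p q - C (p + 1) q]
  exact sum_congr rfl fun q _ => by rw [crossDiff]; ring

theorem sum_range_crossDiff_left (C : ℕ → ℕ → ℤ) (m q : ℕ) :
    ∑ p ∈ range m, crossDiff C p q = (C 0 (q + 1) - C 0 q) - (C m (q + 1) - C m q) := by
  rw [← sum_range_sub' fun p => C p (q + 1) - C p q]
  exact sum_congr rfl fun p _ => by rw [crossDiff]; ring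

theorem eq_distFun_crossDiff {m n : ℕ} {C : ℕ → ℕ → ℤ} (hcol : ∀ i ≤ m, C i 0 = 0)
    (hrow : ∀ k ≤ n, C m k = 0) {i k : ℕ} (hi : i ≤ m) (hk : k ≤ n) :
    C i k = distFun (fun (p : Fin m) (q : Fin n) => crossDiff C p q) i k := by
  have hsum_row (p : Fin m) :
      ∑ q : Fin n, (if (q : ℕ) < k then crossDiff C p q else 0) = C p k - C (p + 1) k := by
    rw [Fin.sum_ite_val_lt (crossDiff C p) hk, sum_range_crossDiff_right,
      hcol p p.is_lt.le, hcol (p + 1) p.is_lt, sub_self, sub_zero]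
  have htelescope := sum_Ico_sub (fun p => C p k) hi
  calc C i k = ∑ p ∈ Ico i m, (C p k - C (p + 1) k) := by
        rw [sum_sub_distrib] at htelescope ⊢
        linarith [hrow k hk]
    _ = ∑ p : Fin m, if i ≤ (p : ℕ) then C p k - C (p + 1) k else 0 :=
        (Fin.sum_ite_le_val i fun p => C p k - C (p + 1) k).symm
    _ = _ := by
        simp only [distFun, ite_and]
        refine sum_congr rfl fun p _ => ?_
        split_ifs
        · exact (hsum_row p).symm
        · simp

theorem exists_eq_single_of_nonneg_of_sum_eq_one {ι : Type*} [Fintype ι] [DecidableEq ι]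
    {f : ι → ℤ} (hf : ∀ i, 0 ≤ f i) (hsum : ∑ i, f i = 1) :
    ∃ a, f = Pi.single a 1 := by
  obtain ⟨a, -, ha⟩ := exists_ne_zero_of_sum_ne_zero (hsum.trans_ne one_ne_zero)
  have hsplit := add_sum_erase univ f (mem_univ a)
  have hrest_nonneg : 0 ≤ ∑ i ∈ univ.erase a, f i := sum_nonneg fun i _ => hf i
  have hrest : ∑ i ∈ univ.erase a, f i = 0 := by have := hf a; omega
  refine ⟨a, funext fun b => ?_⟩
  rcases eq_or_ne b a with rfl | hb
  · simp only [Pi.single_eq_same]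
    omega
  · rw [Pi.single_eq_of_ne hb]
    exact (sum_eq_zero_iff_of_nonneg fun i _ => hf i).mp hrest b
      (mem_erase.mpr ⟨hb, mem_univ b⟩)

theorem exists_eq_permMat {n : ℕ} {D : Fin n → Fin n → ℤ} (hD : ∀ p q, 0 ≤ D p q)
    (hrow : ∀ p, ∑ q, D p q = 1) (hcol : ∀ q, ∑ p, D p q = 1) :
    ∃ σ : Equiv.Perm (Fin n), D = PermMat σ := by
  choose F hF using fun p => exists_eq_single_of_nonneg_of_sum_eq_one (hD p) (hrow p)
  have hinj : F.Injective := by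
    intro p p' hpp'
    obtain ⟨a, ha⟩ :=
      exists_eq_single_of_nonneg_of_sum_eq_one (fun r => hD r (F p)) (hcol (F p))
    have heq_a (r : Fin n) (hr : D r (F p) = 1) : r = a := by
      by_contra hne
      simpa [Pi.single_eq_of_ne hne, hr] using congrFun ha r
    exact (heq_a p (by simp [hF p])).trans (heq_a p' (by simp [hpp', hF p'])).symm
  refine ⟨Equiv.ofBijective F hinj.bijective_of_finite, funext₂ fun p q => ?_⟩
  simp [PermMat, hF p, Pi.single_apply, eq_comm]

namespace IsSimpleUnitMonge

variable {n : ℕ} {C : ℕ → ℕ → ℤ}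

theorem crossDiff_nonneg (hC : IsSimpleUnitMonge n C) {p q : ℕ} (hp : p < n) (hq : q < n) :
    0 ≤ crossDiff C p q := by
  have := hC.monge p.le_succ hp q.le_succ hq
  rw [crossDiff]
  linarith

theorem sum_crossDiff_row (hC : IsSimpleUnitMonge n C) (p : Fin n) :
    ∑ q : Fin n, crossDiff C p q = 1 := by
  rw [Fin.sum_univ_eq_sum_range (crossDiff C p), sum_range_crossDiff_right,
    hC.col_last p p.is_lt.le, hC.col_last (p + 1) p.is_lt, hC.col_zero p p.is_lt.le,
    hC.col_zero (p + 1) p.is_lt]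
  push_cast
  ring

theorem sum_crossDiff_col (hC : IsSimpleUnitMonge n C) (q : Fin n) :
    ∑ p : Fin n, crossDiff C p q = 1 := by
  rw [Fin.sum_univ_eq_sum_range (crossDiff C · q), sum_range_crossDiff_left,
    hC.row_zero q q.is_lt.le, hC.row_zero (q + 1) q.is_lt, hC.row_last q q.is_lt.le,
    hC.row_last (q + 1) q.is_lt]
  push_cast
  ring

theorem exists_eq_distFun_permMat (hC : IsSimpleUnitMonge n C) :
    ∃ σ : Equiv.Perm (Fin n), ∀ i ≤ n, ∀ k ≤ n, C i k = distFun (PermMat σ) i k := by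
  obtain ⟨σ, hσ⟩ := exists_eq_permMat (fun p q => hC.crossDiff_nonneg p.is_lt q.is_lt)
    hC.sum_crossDiff_row hC.sum_crossDiff_col
  exact ⟨σ, fun i hi k hk => hσ ▸ eq_distFun_crossDiff hC.col_zero hC.row_last hi hk⟩

end IsSimpleUnitMonge

/-- simple unit-Monge matrices are closed under distance
multiplication: if `P_A`, `P_B` are permutation matrices and
`C = P_A^Σ ⊙ P_B^Σ`, then `C = P_C^Σ` for some permutation matrix `P_C`. -/
theorem unitMonge_closed_distProd {n : ℕ} (σA σB : Equiv.Perm (Fin n)) :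
    ∃ σC : Equiv.Perm (Fin n), ∀ i k : Fin (n+1),
      distProd (distSum (PermMat σA)) (distSum (PermMat σB)) i k
        = distSum (PermMat σC) i k := by
  obtain ⟨σC, hσC⟩ := ((isSimpleUnitMonge_distFun_permMat σA).minPlus
    (isSimpleUnitMonge_distFun_permMat σB)).exists_eq_distFun_permMat
  -- `distProd (distSum _) (distSum _)` is `minPlus n (distFun _) (distFun _)` at `Fin` indices
  exact ⟨σC, fun i k => hσC i i.is_le k k.is_le⟩
end

section
/- The matrix (Id^R)^Σ is an annihilator for distance multiplication of simple unit-Monge matrices: for every n×n permutation matrix P, P^Σ ⊙ (Id^R)^Σ = (Id^R)^Σ ⊙ P^Σ = (Id^R)^Σ, where Id^R is the reverse identity permutation matrix (Id^R(î,ĵ) = 1 iff î+ĵ = n). -/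
/-- The reverse identity permutation matrix: nonzeros exactly where the
half-integer indices `î + ĵ = n`, i.e. on indices `p + q = n − 1`. -/
def IdR (n : ℕ) : Fin n → Fin n → ℤ :=
  fun i j => if (i : ℕ) + (j : ℕ) = n - 1 then 1 else 0

/-! For a permutation `σ`, `P^Σ(i, j)` counts the rows `p ≥ i` with `σ p < j`. Hence
`max 0 (j - i) ≤ P^Σ(i, j)`, with `P^Σ(i, 0) = P^Σ(n, k) = 0`, `P^Σ(i, n) = n - i` and
`P^Σ(0, k) = k`, while for the reversal `(Id^R)^Σ(i, j) = min (n - i) j`. So every term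
of either distance product is at least `min (n - i) k`, and the middle indices `j = 0`
and `j = n` attain `k` and `n - i`. -/

open Finset

theorem Fin.card_filter_le_val {n m : ℕ} : #{i : Fin n | m ≤ (i : ℕ)} = n - m := by
  have h := card_filter_add_card_filter_not (s := (univ : Finset (Fin n))) (fun i => (i : ℕ) < m)
  simp only [not_lt, Fin.card_filter_val_lt, card_univ, Fintype.card_fin] at h
  omega

theorem Equiv.Perm.card_filter_val_apply_lt {n : ℕ} (σ : Equiv.Perm (Fin n)) (m : ℕ) :
    #{p : Fin n | (σ p : ℕ) < m} = min n m := by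
  rw [← Fin.card_filter_val_lt]
  exact card_equiv σ (by simp)

theorem distProd_eq_of_forall_le {n : ℕ} {A B : Fin (n+1) → Fin (n+1) → ℤ} {i k : Fin (n+1)}
    {c : ℤ} (hle : ∀ j, c ≤ A i j + B j k) (j₀ : Fin (n+1)) (hj₀ : A i j₀ + B j₀ k = c) :
    distProd A B i k = c :=
  le_antisymm (hj₀ ▸ inf'_le _ (mem_univ j₀)) (le_inf' _ _ fun j _ => hle j)

section PermMat

variable {n : ℕ} (σ : Equiv.Perm (Fin n))

theorem distSum_permMat (i j : Fin (n+1)) :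
    distSum (PermMat σ) i j = #{p : Fin n | (i : ℕ) ≤ p ∧ (σ p : ℕ) < j} := by
  rw [natCast_card_filter]
  refine sum_congr rfl fun p _ => ?_
  rw [sum_eq_single (σ p) (fun q _ hq => by simp [PermMat, Ne.symm hq]) (by simp)]
  simp [PermMat]

theorem distSum_permMat_nonneg (i j : Fin (n+1)) : 0 ≤ distSum (PermMat σ) i j := by
  rw [distSum_permMat]
  positivity

theorem sub_le_distSum_permMat (i j : Fin (n+1)) : (j : ℤ) - i ≤ distSum (PermMat σ) i j := by
  have hcover : ({p | (σ p : ℕ) < j} : Finset (Fin n)) ⊆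
      ({p | (p : ℕ) < i} : Finset (Fin n)) ∪
        ({p | (i : ℕ) ≤ p ∧ (σ p : ℕ) < j} : Finset (Fin n)) := by
    intro p; simp only [mem_filter, mem_union, mem_univ, true_and]; omega
  have := (card_le_card hcover).trans (card_union_le _ _)
  rw [σ.card_filter_val_apply_lt, Fin.card_filter_val_lt] at this
  rw [distSum_permMat]
  omega

theorem distSum_permMat_zero_right (i : Fin (n+1)) : distSum (PermMat σ) i 0 = 0 := by
  simp [distSum_permMat]

theorem distSum_permMat_last_left (k : Fin (n+1)) : distSum (PermMat σ) (Fin.last n) k = 0 := by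
  simp [distSum_permMat]

theorem distSum_permMat_last_right (i : Fin (n+1)) :
    distSum (PermMat σ) i (Fin.last n) = n - i := by
  simp [distSum_permMat, Fin.card_filter_le_val, Nat.cast_sub (Fin.is_le i)]

theorem distSum_permMat_zero_left (k : Fin (n+1)) : distSum (PermMat σ) 0 k = k := by
  simp [distSum_permMat, σ.card_filter_val_apply_lt, Fin.is_le k]

end PermMat

theorem idR_eq_permMat_revPerm (n : ℕ) : IdR n = PermMat Fin.revPerm := by
  ext i j
  simp only [IdR, PermMat, Fin.revPerm_apply, Fin.ext_iff, Fin.val_rev]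
  congr 1
  have := i.isLt
  exact propext (by omega)

theorem distSum_idR {n : ℕ} (i j : Fin (n+1)) : distSum (IdR n) i j = min ((n : ℤ) - i) j := by
  have hfilter : ({p | (i : ℕ) ≤ p ∧ (Fin.revPerm p : ℕ) < j} : Finset (Fin n)) =
      ({p | max (i : ℕ) (n - j) ≤ p} : Finset (Fin n)) := by
    ext p; simp only [mem_filter, mem_univ, true_and, Fin.revPerm_apply, Fin.val_rev]; omega
  rw [idR_eq_permMat_revPerm, distSum_permMat, hfilter, Fin.card_filter_le_val]
  omega

theorem distProd_distSum_permMat_idR {n : ℕ} (σ : Equiv.Perm (Fin n)) (i k : Fin (n+1)) :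
    distProd (distSum (PermMat σ)) (distSum (IdR n)) i k = distSum (IdR n) i k := by
  have hle : ∀ j, min ((n : ℤ) - i) k ≤ distSum (PermMat σ) i j + distSum (IdR n) j k := by
    intro j
    have := distSum_permMat_nonneg σ i j
    have := sub_le_distSum_permMat σ i j
    rw [distSum_idR]
    omega
  rw [distSum_idR]
  rcases min_choice ((n : ℤ) - i) k with h | h <;> rw [h] at hle ⊢
  · exact distProd_eq_of_forall_le hle (Fin.last n)
      (by simp [distSum_permMat_last_right, distSum_idR])
  · exact distProd_eq_of_forall_le hle 0
      (by simp [distSum_permMat_zero_right, distSum_idR, Fin.is_le k])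

theorem distProd_distSum_idR_permMat {n : ℕ} (σ : Equiv.Perm (Fin n)) (i k : Fin (n+1)) :
    distProd (distSum (IdR n)) (distSum (PermMat σ)) i k = distSum (IdR n) i k := by
  have hle : ∀ j, min ((n : ℤ) - i) k ≤ distSum (IdR n) i j + distSum (PermMat σ) j k := by
    intro j
    have := distSum_permMat_nonneg σ j k
    have := sub_le_distSum_permMat σ j k
    rw [distSum_idR]
    omega
  rw [distSum_idR]
  rcases min_choice ((n : ℤ) - i) k with h | h <;> rw [h] at hle ⊢
  · exact distProd_eq_of_forall_le hle (Fin.last n)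
      (by simp [distSum_permMat_last_left, distSum_idR])
  · exact distProd_eq_of_forall_le hle 0
      (by simp [distSum_permMat_zero_left, distSum_idR, Fin.is_le i])

/-- `(Id^R)^Σ` is an annihilator for distance multiplication of
simple unit-Monge matrices. -/
theorem idR_annihilator {n : ℕ} (σ : Equiv.Perm (Fin n)) :
    (∀ i k : Fin (n+1),
        distProd (distSum (PermMat σ)) (distSum (IdR n)) i k = distSum (IdR n) i k) ∧
    (∀ i k : Fin (n+1),
        distProd (distSum (IdR n)) (distSum (PermMat σ)) i k = distSum (IdR n) i k) :=
  ⟨distProd_distSum_permMat_idR σ, distProd_distSum_idR_permMat σ⟩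
end

section
/- Distance-product criterion for Bruhat comparability: permutation matrix P_A is below P_B in the Bruhat order if and only if P_A^R ⊡ P_B = Id^R, i.e. the distance product (P_A^R)^Σ ⊙ P_B^Σ equals (Id^R)^Σ. -/
/-- A single Bruhat step: a `2×2` submatrix of the form `[[1,0],[0,1]]`
(on rows `i < i'` and columns `j < j'`) is replaced by `[[0,1],[1,0]]`,
all other entries being unchanged. -/
def BruhatStep {n : ℕ} (P Q : Fin n → Fin n → ℤ) : Prop :=
  ∃ i i' j j' : Fin n, i < i' ∧ j < j' ∧
    P i j = 1 ∧ P i j' = 0 ∧ P i' j = 0 ∧ P i' j' = 1 ∧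
    Q i j = 0 ∧ Q i j' = 1 ∧ Q i' j = 1 ∧ Q i' j' = 0 ∧
    (∀ a b : Fin n, ¬ ((a = i ∨ a = i') ∧ (b = j ∨ b = j')) → Q a b = P a b)

/-- `P` is below `Q` in the Bruhat order: `P` can be transformed into `Q`
by a sequence of Bruhat steps. -/
def Bruhat {n : ℕ} (P Q : Fin n → Fin n → ℤ) : Prop :=
  Relation.ReflTransGen BruhatStep P Q

/-- Counterclockwise 90-degree rotation: `P^R(î,ĵ) = P(ĵ, n−î)`. -/
def rot {n : ℕ} (P : Fin n → Fin n → ℤ) : Fin n → Fin n → ℤ :=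
  fun i j => P j i.rev

open Finset Equiv

section

variable {n : ℕ}

def permRank (σ : Perm (Fin n)) (a b : ℕ) : ℕ :=
  ∑ q : Fin n, if (q : ℕ) < a ∧ (σ q : ℕ) < b then 1 else 0

lemma sum_perm_val_lt (σ : Perm (Fin n)) (b : ℕ) :
    (∑ q : Fin n, if (σ q : ℕ) < b then 1 else 0) = min n b := by
  rw [Equiv.sum_comp σ (fun p : Fin n => if (p : ℕ) < b then 1 else 0), sum_boole,
    Nat.cast_id, Fin.card_filter_val_lt]

lemma permRank_zero_left (σ : Perm (Fin n)) (b : ℕ) : permRank σ 0 b = 0 := by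
  simp [permRank]

lemma permRank_self_left (σ : Perm (Fin n)) (b : ℕ) : permRank σ n b = min n b := by
  simp only [permRank, Fin.is_lt, true_and, sum_perm_val_lt]

lemma permRank_mono_right (σ : Perm (Fin n)) (a : ℕ) : Monotone (permRank σ a) :=
  fun _ _ hb => sum_le_sum fun _ _ => by split_ifs <;> omega

lemma permMat_nonneg (σ : Perm (Fin n)) : 0 ≤ PermMat σ :=
  fun _ _ => by unfold PermMat; split_ifs <;> simp

lemma distSum_mono_right {m : ℕ} {D : Fin m → Fin n → ℤ} (hD : 0 ≤ D) (i : Fin (m + 1)) :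
    Monotone (distSum D i) :=
  fun _ _ hk => sum_le_sum fun p _ => sum_le_sum fun q _ => by
    have := hD p q
    split_ifs <;> omega

lemma distSum_permMat_add_permRank (σ : Perm (Fin n)) (j k : Fin (n + 1)) :
    distSum (PermMat σ) j k + permRank σ j k = k := by
  have hrow : ∀ p : Fin n,
      (∑ q : Fin n, if (j : ℕ) ≤ p ∧ (q : ℕ) < k then PermMat σ p q else 0)
        = ((if (j : ℕ) ≤ p ∧ (σ p : ℕ) < k then 1 else 0 : ℕ) : ℤ) := fun p => by
    rw [sum_eq_single (σ p) (fun q _ hq => by simp [PermMat, Ne.symm hq]) (by simp)]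
    simp [PermMat]
  have hsplit :
      (∑ p : Fin n, if (j : ℕ) ≤ p ∧ (σ p : ℕ) < k then 1 else 0) + permRank σ j k
        = ∑ q : Fin n, if (σ q : ℕ) < k then 1 else 0 := by
    rw [permRank, ← sum_add_distrib]
    exact sum_congr rfl fun q _ => by split_ifs <;> omega
  rw [sum_perm_val_lt, min_eq_right (Nat.lt_succ_iff.1 k.is_lt)] at hsplit
  simp only [distSum, hrow, ← Nat.cast_sum]
  exact_mod_cast hsplit

lemma distSum_rot_permMat (σ : Perm (Fin n)) (i j : Fin (n + 1)) :
    distSum (rot (PermMat σ)) i j = permRank σ j (n - i) := by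
  have hcol : ∀ q : Fin n,
      (∑ p : Fin n, if (i : ℕ) ≤ p ∧ (q : ℕ) < j then PermMat σ q p.rev else 0)
        = ((if (q : ℕ) < j ∧ (σ q : ℕ) < n - i then 1 else 0 : ℕ) : ℤ) := fun q => by
    have hne : ∀ p : Fin n, p ≠ (σ q).rev → σ q ≠ p.rev :=
      fun p hp h => hp (by rw [h, Fin.rev_rev])
    rw [sum_eq_single (σ q).rev (fun p _ hp => by simp [PermMat, hne p hp]) (by simp)]
    simp only [PermMat, Fin.rev_rev, if_true, Fin.val_rev]
    split_ifs <;> simp <;> omega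
  rw [distSum, sum_comm]
  simp only [rot, hcol, permRank, Nat.cast_sum]

lemma distSum_IdR (i k : Fin (n + 1)) : distSum (IdR n) i k = (min (n - i) k : ℕ) := by
  have hrow : ∀ p : Fin n,
      (∑ q : Fin n, if (i : ℕ) ≤ p ∧ (q : ℕ) < k then IdR n p q else 0)
        = ((if (i : ℕ) ≤ p ∧ (p.rev : ℕ) < k then 1 else 0 : ℕ) : ℤ) := fun p => by
    have hIdR : ∀ q : Fin n, IdR n p q = if q = p.rev then 1 else 0 := fun q => by
      simp only [IdR, Fin.ext_iff, Fin.val_rev]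
      split_ifs <;> omega
    rw [sum_eq_single p.rev (fun q _ hq => by simp [hIdR, hq]) (by simp)]
    simp [hIdR]
  have hrev : (∑ p : Fin n, if (i : ℕ) ≤ p ∧ (p.rev : ℕ) < k then 1 else 0)
      = ∑ p : Fin n, if (p : ℕ) < min (n - i) k then 1 else 0 := by
    rw [← Equiv.sum_comp Fin.revPerm]
    refine sum_congr rfl fun p _ => ?_
    simp only [Fin.revPerm_apply, Fin.rev_rev, Fin.val_rev]
    split_ifs <;> omega
  simp only [distSum, hrow, ← Nat.cast_sum, hrev, sum_boole, Nat.cast_id,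
    Fin.card_filter_val_lt]
  omega

lemma permRank_min_min (σ : Perm (Fin n)) (a b : ℕ) :
    permRank σ (min a n) (min b n) = permRank σ a b :=
  sum_congr rfl fun q _ => by have := (σ q).is_lt; split_ifs <;> omega

lemma distProd_rot_permMat_le (σ τ : Perm (Fin n)) (i k : Fin (n + 1)) :
    distProd (distSum (rot (PermMat σ))) (distSum (PermMat τ)) i k ≤ (min (n - i) k : ℕ) := by
  have hτ := distSum_permMat_add_permRank τ
  rcases le_total (n - i) (k : ℕ) with hik | hki
  · refine (inf'_le _ (mem_univ (Fin.last n))).trans_eq ?_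
    have := hτ (Fin.last n) k
    simp only [distSum_rot_permMat, Fin.val_last, permRank_self_left] at this ⊢
    omega
  · refine (inf'_le _ (mem_univ 0)).trans_eq ?_
    have := hτ 0 k
    simp only [distSum_rot_permMat, Fin.val_zero, permRank_zero_left] at this ⊢
    omega

lemma le_distProd_rot_permMat (σ τ : Perm (Fin n)) (h : permRank τ ≤ permRank σ)
    (i k : Fin (n + 1)) :
    (min (n - i) k : ℕ) ≤ distProd (distSum (rot (PermMat σ))) (distSum (PermMat τ)) i k := by
  refine le_inf' _ _ fun j _ => ?_
  obtain ⟨m, hm⟩ : ∃ m : Fin (n + 1), (m : ℕ) = n - i := ⟨⟨n - i, by omega⟩, rfl⟩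
  have hτ := distSum_permMat_add_permRank τ j
  rw [distSum_rot_permMat, ← hm]
  rcases le_total k m with hkm | hmk
  · have := hτ k
    have : permRank τ j k ≤ permRank σ j k := h j k
    have := permRank_mono_right σ j (Fin.le_def.1 hkm)
    omega
  · have := hτ k
    have := hτ m
    have : permRank τ j m ≤ permRank σ j m := h j m
    have := distSum_mono_right (permMat_nonneg τ) j hmk
    omega

lemma permRank_le_of_le_distProd (σ τ : Perm (Fin n))
    (h : ∀ i k : Fin (n + 1),
      (min (n - i) k : ℕ) ≤ distProd (distSum (rot (PermMat σ))) (distSum (PermMat τ)) i k) :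
    permRank τ ≤ permRank σ := by
  intro a b
  show permRank τ a b ≤ permRank σ a b
  rw [← permRank_min_min σ, ← permRank_min_min τ]
  have hle := (h ⟨n - min b n, by omega⟩ ⟨min b n, by omega⟩).trans
    (inf'_le _ (mem_univ ⟨min a n, by omega⟩))
  have := distSum_permMat_add_permRank τ ⟨min a n, by omega⟩ ⟨min b n, by omega⟩
  simp only [distSum_rot_permMat, Nat.sub_sub_self (min_le_right b n)] at hle
  dsimp only at this
  omega

theorem distProd_eq_distSum_IdR_iff (σ τ : Perm (Fin n)) :
    (∀ i k : Fin (n + 1),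
        distProd (distSum (rot (PermMat σ))) (distSum (PermMat τ)) i k = distSum (IdR n) i k)
      ↔ permRank τ ≤ permRank σ := by
  simp only [distSum_IdR]
  exact ⟨fun h => permRank_le_of_le_distProd σ τ fun i k => (h i k).ge,
    fun h i k => (distProd_rot_permMat_le σ τ i k).antisymm (le_distProd_rot_permMat σ τ h i k)⟩

lemma permMat_injective : Function.Injective (PermMat : Perm (Fin n) → Fin n → Fin n → ℤ) :=
  fun σ τ h => Equiv.ext fun q => by
    simpa [PermMat, eq_comm] using congrFun (congrFun h q) (σ q)

lemma bruhatStep_permMat_iff (σ : Perm (Fin n)) (Q : Fin n → Fin n → ℤ) :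
    BruhatStep (PermMat σ) Q ↔
      ∃ i i' : Fin n, i < i' ∧ σ i < σ i' ∧ Q = PermMat (σ * swap i i') := by
  constructor
  · rintro ⟨i, i', j, j', hii, hjj, hij, -, -, hij', hQij, hQij', hQi'j, hQi'j', hQ⟩
    obtain rfl : σ i = j := by by_contra h; simp [PermMat, h] at hij
    obtain rfl : σ i' = j' := by by_contra h; simp [PermMat, h] at hij'
    refine ⟨i, i', hii, hjj, funext fun a => funext fun b => ?_⟩
    by_cases hab : (a = i ∨ a = i') ∧ (b = σ i ∨ b = σ i')
    · rcases hab with ⟨rfl | rfl, rfl | rfl⟩ <;> simp_all [PermMat, hjj.ne, hjj.ne']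
    · rw [hQ a b hab]
      simp only [PermMat, Perm.mul_apply, swap_apply_def]
      split_ifs <;> simp_all
  · rintro ⟨i, i', hii, hv, rfl⟩
    refine ⟨i, i', σ i, σ i', hii, hv, ?_⟩
    simp only [PermMat, Perm.mul_apply, swap_apply_def]
    simp only [hii.ne', hv.ne, hv.ne', true_and, if_true, if_false]
    intro a b hab
    split_ifs <;> simp_all [eq_comm]

lemma permRank_mul_swap_add {σ : Perm (Fin n)} {i i' : Fin n} (hii : i < i') (hv : σ i < σ i')
    (a b : ℕ) :
    permRank (σ * swap i i') a b
        + (if (i : ℕ) < a ∧ a ≤ i' ∧ (σ i : ℕ) < b ∧ b ≤ σ i' then 1 else 0)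
      = permRank σ a b := by
  have hi' : i' ∈ univ.erase i := mem_erase.2 ⟨hii.ne', mem_univ _⟩
  simp only [permRank, ← add_sum_erase _ _ (mem_univ i), ← add_sum_erase _ _ hi']
  have hrest : ∀ q ∈ (univ.erase i).erase i', (σ * swap i i') q = σ q := fun q hq => by
    simp only [mem_erase] at hq
    simp [swap_apply_of_ne_of_ne hq.2.1 hq.1]
  rw [sum_congr rfl fun q hq => by rw [hrest q hq]]
  simp only [Perm.mul_apply, swap_apply_left, swap_apply_right]
  split_ifs <;> omega

lemma permRank_le_of_bruhat {σ τ : Perm (Fin n)} (h : Bruhat (PermMat σ) (PermMat τ)) :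
    permRank τ ≤ permRank σ := by
  suffices ∀ Q, Bruhat (PermMat σ) Q → ∃ ρ, Q = PermMat ρ ∧ permRank ρ ≤ permRank σ by
    obtain ⟨ρ, hρ, hle⟩ := this _ h
    rwa [permMat_injective hρ]
  intro Q hQ
  induction hQ with
  | refl => exact ⟨σ, rfl, le_rfl⟩
  | tail _ hstep ih =>
    obtain ⟨ρ, rfl, hle⟩ := ih
    obtain ⟨i, i', hii, hv, rfl⟩ := (bruhatStep_permMat_iff ρ _).1 hstep
    refine ⟨ρ * swap i i', rfl, fun a b => ?_⟩
    have := permRank_mul_swap_add hii hv a b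
    have : permRank ρ a b ≤ permRank σ a b := hle a b
    show permRank (ρ * swap i i') a b ≤ permRank σ a b
    omega

section

variable {σ τ : Perm (Fin n)}

lemma apply_lt_apply_of_permRank_le (h : permRank τ ≤ permRank σ) {i : Fin n}
    (hmin : ∀ q < i, σ q = τ q) (hne : σ i ≠ τ i) : σ i < τ i := by
  by_contra hge
  have hlt : τ i < σ i := lt_of_le_of_ne (not_lt.1 hge) (Ne.symm hne)
  have hsum : permRank σ (i + 1) (τ i + 1) < permRank τ (i + 1) (τ i + 1) := by
    refine sum_lt_sum (fun q _ => ?_) ⟨i, mem_univ _, ?_⟩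
    · rcases lt_trichotomy q i with hq | rfl | hq
      · rw [hmin q hq]
      · split_ifs <;> omega
      · split_ifs <;> omega
    · split_ifs <;> omega
  exact hsum.not_ge (h _ _)

lemma permRank_lt_of_minimal_swap (h : permRank τ ≤ permRank σ) {i i' : Fin n}
    (hmin : ∀ q < i, σ q = τ q) (hσi : σ i < τ i) (hii : i < i') (hi' : σ i' ≤ τ i)
    (hgap : ∀ q, i < q → q < i' → σ q ≤ σ i ∨ τ i < σ q)
    {a b : ℕ} (ha : (i : ℕ) < a) (ha' : a ≤ i') (hb : (σ i : ℕ) < b) (hb' : b ≤ σ i') :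
    permRank τ a b < permRank σ a b := by
  -- Compare row by row with the ranks at height `τ i + 1`, where dominance is known: row `i`
  -- favours `σ`, and by minimality of `i'` no row strictly between `i` and `i'` favours `τ`.
  have hsum :
      permRank τ a b + permRank σ a (τ i + 1) < permRank σ a b + permRank τ a (τ i + 1) := by
    simp only [permRank, ← sum_add_distrib]
    refine sum_lt_sum (fun q _ => ?_) ⟨i, mem_univ _, ?_⟩
    · rcases lt_trichotomy q i with hq | rfl | hq
      · rw [hmin q hq]
      · split_ifs <;> omega
      · by_cases hqa : (q : ℕ) < a
        · have := hgap q hq (by omega)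
          have := σ.injective.ne hq.ne'
          split_ifs <;> omega
        · simp [hqa]
    · split_ifs <;> omega
  have : permRank τ a (τ i + 1) ≤ permRank σ a (τ i + 1) := h _ _
  omega

lemma exists_swap_permRank_le (h : permRank τ ≤ permRank σ) (hne : σ ≠ τ) :
    ∃ i i' : Fin n, i < i' ∧ σ i < σ i' ∧ permRank τ ≤ permRank (σ * swap i i') := by
  obtain ⟨i, hi⟩ := exists_minimal_of_wellFoundedLT (fun q => σ q ≠ τ q)
    (not_forall.1 fun h' => hne (Equiv.ext h'))
  rw [minimal_iff_forall_lt] at hi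
  obtain ⟨hne_i, hmin⟩ := hi
  replace hmin : ∀ q < i, σ q = τ q := fun q hq => not_not.1 (hmin hq)
  have hσi := apply_lt_apply_of_permRank_le h hmin hne_i
  have hcand : i < σ.symm (τ i) ∧ σ i < σ (σ.symm (τ i)) ∧ σ (σ.symm (τ i)) ≤ τ i := by
    refine ⟨lt_of_not_ge fun hle => ?_, by simpa using hσi, by simp⟩
    rcases hle.lt_or_eq with hlt | heq
    · have := hmin _ hlt
      simp only [apply_symm_apply] at this
      exact hlt.ne (τ.injective this.symm)
    · have := σ.apply_symm_apply (τ i)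
      rw [heq] at this
      exact hne_i this
  obtain ⟨i', hi'⟩ := exists_minimal_of_wellFoundedLT
    (fun q => i < q ∧ σ i < σ q ∧ σ q ≤ τ i) ⟨_, hcand⟩
  rw [minimal_iff_forall_lt] at hi'
  obtain ⟨⟨hii, hv, hv'⟩, hmin'⟩ := hi'
  have hgap : ∀ q, i < q → q < i' → σ q ≤ σ i ∨ τ i < σ q := fun q hq hq' => by
    have := hmin' hq'
    simp only [hq, true_and, not_and, not_le] at this
    exact (le_or_gt (σ q) (σ i)).imp_right this
  refine ⟨i, i', hii, hv, fun a b => ?_⟩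
  have hswap := permRank_mul_swap_add hii hv a b
  show permRank τ a b ≤ permRank (σ * swap i i') a b
  split_ifs at hswap with hbox
  · have := permRank_lt_of_minimal_swap h hmin hσi hii hv' hgap hbox.1 hbox.2.1 hbox.2.2.1
      hbox.2.2.2
    omega
  · have : permRank τ a b ≤ permRank σ a b := h a b
    omega

end

def permRankSum (σ : Perm (Fin n)) : ℕ :=
  ∑ a ∈ range (n + 1), ∑ b ∈ range (n + 1), permRank σ a b

lemma permRankSum_mul_swap_lt {σ : Perm (Fin n)} {i i' : Fin n} (hii : i < i')
    (hv : σ i < σ i') : permRankSum (σ * swap i i') < permRankSum σ := by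
  have hle : ∀ a b, permRank (σ * swap i i') a b ≤ permRank σ a b := fun a b => by
    have := permRank_mul_swap_add hii hv a b
    omega
  have hlt : permRank (σ * swap i i') i' (σ i') < permRank σ i' (σ i') := by
    have := permRank_mul_swap_add hii hv i' (σ i')
    rw [if_pos ⟨hii, le_rfl, hv, le_rfl⟩] at this
    omega
  refine sum_lt_sum (fun a _ => sum_le_sum fun b _ => hle a b) ⟨i', by simp, ?_⟩
  exact sum_lt_sum (fun b _ => hle i' b) ⟨σ i', by simp, hlt⟩

theorem bruhat_permMat_of_permRank_le (σ τ : Perm (Fin n)) (h : permRank τ ≤ permRank σ) :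
    Bruhat (PermMat σ) (PermMat τ) := by
  by_cases hστ : σ = τ
  · exact hστ ▸ .refl
  obtain ⟨i, i', hii, hv, h'⟩ := exists_swap_permRank_le h hστ
  exact .head ((bruhatStep_permMat_iff σ _).2 ⟨i, i', hii, hv, rfl⟩)
    (bruhat_permMat_of_permRank_le (σ * swap i i') τ h')
termination_by permRankSum σ
decreasing_by exact permRankSum_mul_swap_lt hii hv

end

/-- distance-product criterion for Bruhat comparability:
`P_A` is below `P_B` in the Bruhat order iff `(P_A^R)^Σ ⊙ P_B^Σ = (Id^R)^Σ`. -/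
theorem bruhat_iff_distProd {n : ℕ} (σA σB : Equiv.Perm (Fin n)) :
    Bruhat (PermMat σA) (PermMat σB) ↔
      ∀ i k : Fin (n+1),
        distProd (distSum (rot (PermMat σA))) (distSum (PermMat σB)) i k
          = distSum (IdR n) i k := by
  rw [distProd_eq_distSum_IdR_iff]
  exact ⟨permRank_le_of_bruhat, bruhat_permMat_of_permRank_le σA σB⟩
end

section
/- Seaweed matrix composition for string concatenation (string-substring component): for strings a = a'a'' and b of length n, the string-substring seaweed matrices satisfy P^{⊔}_{a,b} = P^{⊔}_{a',b} ⊡ P^{⊔}_{a'',b}, i.e. (P^{⊔}_{a',b})^Σ ⊙ (P^{⊔}_{a'',b})^Σ = (P^{⊔}_{a,b})^Σ, where ⊙ is the distance product over the middle index range [0:n]. -/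
/-- A subpermutation matrix: a 0-1 matrix with at most one nonzero in
every row and every column. -/
def IsSubperm {n : ℕ} (P : Fin n → Fin n → ℤ) : Prop :=
  (∀ i j, P i j = 0 ∨ P i j = 1) ∧ (∀ i, ∑ j, P i j ≤ 1) ∧ (∀ j, ∑ i, P i j ≤ 1)

/-- The LCS score of two strings. -/
def lcsNat {α : Type*} [DecidableEq α] : List α → List α → ℕ
  | [], _ => 0
  | _ :: _, [] => 0
  | x :: xs, y :: ys =>
      max (max (lcsNat (x :: xs) ys) (lcsNat xs (y :: ys)))
        ((if y = x then 1 else 0) + lcsNat xs ys)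
termination_by a b => a.length + b.length

/-- The string-substring score matrix `H^{⊔}_{x,b}(i,j)`: the LCS score of
`x` against `b⟨i:j⟩` for `i ≤ j`, and `j − i` for `j < i`. -/
def Hss {α : Type*} [DecidableEq α] (x b : List α) (i j : ℕ) : ℤ :=
  if i ≤ j then (lcsNat x ((b.drop i).take (j - i)) : ℤ) else (j : ℤ) - i

/-!
Write `H', H'', H` for the score matrices of `a'`, `a''`, `a'a''` against `b`. A longest
common subsequence of `a'a''` and a substring `b⟨i:k⟩` splits into one of `a'` against
`b⟨i:j⟩` and one of `a''` against `b⟨j:k⟩`, so `H(i,k) = max_j (H'(i,j) + H''(j,k))`; the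
inequality `≤` also holds for the indices `j` outside `[i:k]`, where one of the two scores is
the convention `j − i` or `k − j`. Since `P^Σ(i,j) = j − i − H(i,j)` and the terms `j − i`
telescope, this max-plus composition of the scores is the distance product of the `P^Σ`.
-/

section LCS

variable {α : Type*} [DecidableEq α]

theorem le_lcsNat_of_sublist :
    ∀ (x y z : List α), z.Sublist x → z.Sublist y → z.length ≤ lcsNat x y
  | _, _, [], _, _ => Nat.zero_le _
  | [], _, _::_, hzx, _ => by simp at hzx
  | _::_, [], _::_, _, hzy => by simp at hzy
  | a::xs, b::ys, c::cs, hzx, hzy => by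
    rw [lcsNat]
    cases hzy with
    | cons _ h =>
      have := le_lcsNat_of_sublist (a::xs) ys (c::cs) hzx h
      omega
    | cons_cons _ h =>
      cases hzx with
      | cons _ h' =>
        have := le_lcsNat_of_sublist xs (b::ys) (b::cs) h' (h.cons_cons b)
        omega
      | cons_cons _ h' =>
        have := le_lcsNat_of_sublist xs ys cs h' h
        rw [if_pos rfl]
        simp only [List.length_cons]
        omega
termination_by x y => x.length + y.length

theorem exists_sublist_sublist_length_eq_lcsNat :
    ∀ (x y : List α), ∃ z : List α, z.Sublist x ∧ z.Sublist y ∧ z.length = lcsNat x y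
  | [], y => ⟨[], List.nil_sublist _, List.nil_sublist _, by rw [lcsNat]; rfl⟩
  | a::xs, [] => ⟨[], List.nil_sublist _, List.nil_sublist _, by rw [lcsNat]; rfl⟩
  | a::xs, b::ys => by
    obtain ⟨z1, h1a, h1b, h1c⟩ := exists_sublist_sublist_length_eq_lcsNat (a::xs) ys
    obtain ⟨z2, h2a, h2b, h2c⟩ := exists_sublist_sublist_length_eq_lcsNat xs (b::ys)
    obtain ⟨z3, h3a, h3b, h3c⟩ := exists_sublist_sublist_length_eq_lcsNat xs ys
    have drop_left : ∃ z : List α, z.Sublist (a::xs) ∧ z.Sublist (b::ys) ∧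
        z.length = lcsNat xs (b::ys) := ⟨z2, h2a.cons a, h2b, h2c⟩
    have drop_right : ∃ z : List α, z.Sublist (a::xs) ∧ z.Sublist (b::ys) ∧
        z.length = lcsNat (a::xs) ys := ⟨z1, h1a, h1b.cons b, h1c⟩
    rw [lcsNat]
    by_cases hba : b = a
    · subst hba
      rw [if_pos rfl]
      rcases le_total (max (lcsNat (b::xs) ys) (lcsNat xs (b::ys))) (1 + lcsNat xs ys)
        with hm | hm
      · exact ⟨b::z3, h3a.cons_cons b, h3b.cons_cons b, by simp only [List.length_cons]; omega⟩
      · rcases le_total (lcsNat (b::xs) ys) (lcsNat xs (b::ys)) with h | h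
        · obtain ⟨z, hzx, hzy, hz⟩ := drop_left; exact ⟨z, hzx, hzy, by omega⟩
        · obtain ⟨z, hzx, hzy, hz⟩ := drop_right; exact ⟨z, hzx, hzy, by omega⟩
    · have hmono : lcsNat xs ys ≤ lcsNat xs (b::ys) :=
        h3c ▸ le_lcsNat_of_sublist xs (b::ys) z3 h3a (h3b.cons b)
      rw [if_neg hba, Nat.zero_add]
      rcases le_total (lcsNat (a::xs) ys) (lcsNat xs (b::ys)) with h | h
      · obtain ⟨z, hzx, hzy, hz⟩ := drop_left; exact ⟨z, hzx, hzy, by omega⟩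
      · obtain ⟨z, hzx, hzy, hz⟩ := drop_right; exact ⟨z, hzx, hzy, by omega⟩
termination_by x y => x.length + y.length

theorem lcsNat_nil_right (x : List α) : lcsNat x [] = 0 := by
  cases x <;> rw [lcsNat]

theorem lcsNat_le_length_right (x y : List α) : lcsNat x y ≤ y.length := by
  obtain ⟨z, _, hzy, hz⟩ := exists_sublist_sublist_length_eq_lcsNat x y
  exact hz ▸ hzy.length_le

theorem lcsNat_le_of_sublist_left {x x' : List α} (h : x.Sublist x') (y : List α) :
    lcsNat x y ≤ lcsNat x' y := by
  obtain ⟨z, hzx, hzy, hz⟩ := exists_sublist_sublist_length_eq_lcsNat x y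
  exact hz ▸ le_lcsNat_of_sublist x' y z (hzx.trans h) hzy

theorem lcsNat_add_lcsNat_le_append (u u' v v' : List α) :
    lcsNat u v + lcsNat u' v' ≤ lcsNat (u ++ u') (v ++ v') := by
  obtain ⟨z, hzu, hzv, hz⟩ := exists_sublist_sublist_length_eq_lcsNat u v
  obtain ⟨z', hzu', hzv', hz'⟩ := exists_sublist_sublist_length_eq_lcsNat u' v'
  have := le_lcsNat_of_sublist (u ++ u') (v ++ v') (z ++ z') (hzu.append hzu') (hzv.append hzv')
  rw [List.length_append] at this
  omega

theorem lcsNat_append_le_lcsNat_add_length (x v w : List α) :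
    lcsNat x (v ++ w) ≤ lcsNat x v + w.length := by
  obtain ⟨z, hzx, hzvw, hz⟩ := exists_sublist_sublist_length_eq_lcsNat x (v ++ w)
  obtain ⟨z1, z2, rfl, hz1, hz2⟩ := List.sublist_append_iff.mp hzvw
  have := le_lcsNat_of_sublist x v z1 ((List.sublist_append_left z1 z2).trans hzx) hz1
  have := hz2.length_le
  rw [List.length_append] at hz
  omega

theorem lcsNat_append_le_length_add_lcsNat (x v w : List α) :
    lcsNat x (v ++ w) ≤ v.length + lcsNat x w := by
  obtain ⟨z, hzx, hzvw, hz⟩ := exists_sublist_sublist_length_eq_lcsNat x (v ++ w)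
  obtain ⟨z1, z2, rfl, hz1, hz2⟩ := List.sublist_append_iff.mp hzvw
  have := le_lcsNat_of_sublist x w z2 ((List.sublist_append_right z1 z2).trans hzx) hz2
  have := hz1.length_le
  rw [List.length_append] at hz
  omega

theorem exists_lcsNat_append_eq_add (u u' w : List α) :
    ∃ j ≤ w.length, lcsNat (u ++ u') w = lcsNat u (w.take j) + lcsNat u' (w.drop j) := by
  obtain ⟨z, hzu, hzw, hz⟩ := exists_sublist_sublist_length_eq_lcsNat (u ++ u') w
  obtain ⟨z1, z2, rfl, hz1, hz2⟩ := List.sublist_append_iff.mp hzu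
  obtain ⟨w1, w2, rfl, hw1, hw2⟩ := List.append_sublist_iff.mp hzw
  refine ⟨w1.length, by simp, ?_⟩
  rw [List.take_left, List.drop_left]
  have := le_lcsNat_of_sublist u w1 z1 hz1 hw1
  have := le_lcsNat_of_sublist u' w2 z2 hz2 hw2
  have := lcsNat_add_lcsNat_le_append u u' w1 w2
  rw [List.length_append] at hz
  omega

end LCS

section Substring

variable {α : Type*}

/-- The substring `b⟨i:j⟩`, truncated at the end of `b`. -/
def substr (b : List α) (i j : ℕ) : List α := (b.drop i).take (j - i)

theorem length_substr_le (b : List α) (i j : ℕ) : (substr b i j).length ≤ j - i := by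
  simp only [substr, List.length_take]
  omega

theorem substr_self (b : List α) (i : ℕ) : substr b i i = [] := by
  simp [substr]

theorem substr_append {b : List α} {i j k : ℕ} (hij : i ≤ j) (hjk : j ≤ k) :
    substr b i k = substr b i j ++ substr b j k := by
  rw [substr, substr, substr, show k - i = (j - i) + (k - j) by omega, List.take_add,
    List.drop_drop, show i + (j - i) = j by omega]

theorem take_substr {b : List α} {i k m : ℕ} (h : m ≤ k - i) :
    (substr b i k).take m = substr b i (i + m) := by
  rw [substr, substr, List.take_take, show min m (k - i) = i + m - i by omega]

theorem drop_substr (b : List α) (i k m : ℕ) :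
    (substr b i k).drop m = substr b (i + m) k := by
  rw [substr, substr, List.drop_take, List.drop_drop, show k - (i + m) = k - i - m by omega]

end Substring

section ScoreMatrix

variable {α : Type*} [DecidableEq α] (x y b : List α) {i j k : ℕ}

theorem Hss_of_le (h : i ≤ j) : Hss x b i j = lcsNat x (substr b i j) := if_pos h

theorem Hss_of_lt (h : j < i) : Hss x b i j = (j : ℤ) - i := if_neg (Nat.not_le.mpr h)

theorem Hss_le_sub (i j : ℕ) : Hss x b i j ≤ (j : ℤ) - i := by
  rcases le_or_gt i j with h | h
  · have := (lcsNat_le_length_right x _).trans (length_substr_le b i j)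
    rw [Hss_of_le x b h]
    omega
  · exact (Hss_of_lt x b h).le

theorem Hss_le_Hss_append_right (i j : ℕ) : Hss x b i j ≤ Hss (x ++ y) b i j := by
  unfold Hss
  split_ifs
  · exact_mod_cast lcsNat_le_of_sublist_left (List.sublist_append_left x y) _
  · rfl

theorem Hss_le_Hss_append_left (i j : ℕ) : Hss y b i j ≤ Hss (x ++ y) b i j := by
  unfold Hss
  split_ifs
  · exact_mod_cast lcsNat_le_of_sublist_left (List.sublist_append_right x y) _
  · rfl

theorem Hss_add_Hss_le_of_le (hij : i ≤ j) (hjk : j ≤ k) :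
    Hss x b i j + Hss y b j k ≤ Hss (x ++ y) b i k := by
  rw [Hss_of_le x b hij, Hss_of_le y b hjk, Hss_of_le (x ++ y) b (hij.trans hjk),
    substr_append hij hjk]
  exact_mod_cast lcsNat_add_lcsNat_le_append x y _ _

theorem Hss_le_Hss_add_of_le (hik : i ≤ k) (hkj : k ≤ j) :
    Hss x b i j ≤ Hss x b i k + ((j : ℤ) - k) := by
  rw [Hss_of_le x b (hik.trans hkj), Hss_of_le x b hik, substr_append hik hkj]
  have := lcsNat_append_le_lcsNat_add_length x (substr b i k) (substr b k j)
  have := length_substr_le b k j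
  omega

theorem Hss_le_add_Hss_of_le (hji : j ≤ i) (hik : i ≤ k) :
    Hss x b j k ≤ ((i : ℤ) - j) + Hss x b i k := by
  rw [Hss_of_le x b (hji.trans hik), Hss_of_le x b hik, substr_append hji hik]
  have := lcsNat_append_le_length_add_lcsNat x (substr b j i) (substr b i k)
  have := length_substr_le b j i
  omega

theorem Hss_add_Hss_le_Hss_append (i j k : ℕ) :
    Hss x b i j + Hss y b j k ≤ Hss (x ++ y) b i k := by
  rcases le_or_gt i k with hik | hki
  · rcases le_or_gt i j with hij | hji
    · rcases le_or_gt j k with hjk | hkj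
      · exact Hss_add_Hss_le_of_le x y b hij hjk
      · have := Hss_le_Hss_add_of_le x b hik hkj.le
        have := Hss_le_Hss_append_right x y b i k
        rw [Hss_of_lt y b hkj]
        omega
    · have := Hss_le_add_Hss_of_le y b hji.le hik
      have := Hss_le_Hss_append_left x y b i k
      rw [Hss_of_lt x b hji]
      omega
  · have := Hss_le_sub x b i j
    have := Hss_le_sub y b j k
    rw [Hss_of_lt (x ++ y) b hki]
    omega

theorem exists_Hss_add_Hss_eq_Hss_append (i k : ℕ) :
    ∃ j ≤ k, Hss x b i j + Hss y b j k = Hss (x ++ y) b i k := by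
  rcases le_or_gt i k with hik | hki
  · obtain ⟨m, hm, hsplit⟩ := exists_lcsNat_append_eq_add x y (substr b i k)
    have hm : m ≤ k - i := hm.trans (length_substr_le b i k)
    refine ⟨i + m, by omega, ?_⟩
    rw [Hss_of_le x b (by omega), Hss_of_le y b (by omega), Hss_of_le (x ++ y) b hik, hsplit,
      take_substr hm, drop_substr]
    push_cast
    rfl
  · refine ⟨k, le_rfl, ?_⟩
    rw [Hss_of_lt x b hki, Hss_of_le y b le_rfl, substr_self, lcsNat_nil_right,
      Hss_of_lt (x ++ y) b hki]
    simp

end ScoreMatrix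

theorem distProd_eq_of_le_of_exists {n : ℕ} {A B : Fin (n+1) → Fin (n+1) → ℤ} {i k : Fin (n+1)}
    {c : ℤ} (hle : ∀ j, c ≤ A i j + B j k) (hex : ∃ j, A i j + B j k = c) :
    distProd A B i k = c := by
  obtain ⟨j, hj⟩ := hex
  exact le_antisymm (hj ▸ Finset.inf'_le _ (Finset.mem_univ j))
    (Finset.le_inf' _ _ fun j _ => hle j)

theorem seaweed_composition_general {α : Type*} [DecidableEq α] {n : ℕ}
    (a' a'' b : List α)
    (P' P'' P : Fin n → Fin n → ℤ)
    (h1 : ∀ i j : Fin (n+1), Hss a' b i j = (j : ℕ) - (i : ℕ) - distSum P' i j)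
    (h2 : ∀ i j : Fin (n+1), Hss a'' b i j = (j : ℕ) - (i : ℕ) - distSum P'' i j)
    (h3 : ∀ i j : Fin (n+1), Hss (a' ++ a'') b i j = (j : ℕ) - (i : ℕ) - distSum P i j) :
    ∀ i k : Fin (n+1), distProd (distSum P') (distSum P'') i k = distSum P i k := by
  intro i k
  have telescope : ∀ j : Fin (n+1), distSum P' i j + distSum P'' j k
      = (k : ℤ) - i - (Hss a' b i j + Hss a'' b j k) := fun j => by
    linarith [h1 i j, h2 j k]
  apply distProd_eq_of_le_of_exists
  · intro j
    linarith [telescope j, h3 i k, Hss_add_Hss_le_Hss_append a' a'' b i j k]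
  · obtain ⟨j, hj, hsplit⟩ := exists_Hss_add_Hss_eq_Hss_append a' a'' b i k
    have hj : j < n + 1 := hj.trans_lt k.isLt
    refine ⟨⟨j, hj⟩, ?_⟩
    linarith [telescope ⟨j, hj⟩, h3 i k]

/-- seaweed matrix composition for string concatenation:
if `P'`, `P''`, `P` are the string-substring seaweed matrices of `a'`, `a''`
and `a = a'a''` against `b` respectively, then
`(P')^Σ ⊙ (P'')^Σ = P^Σ` (distance product over the middle range `[0:n]`). -/
theorem seaweed_composition {α : Type*} [DecidableEq α] {n : ℕ}
    (a' a'' b : List α) (hb : b.length = n)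
    (P' P'' P : Fin n → Fin n → ℤ)
    (hP' : IsSubperm P') (hP'' : IsSubperm P'') (hP : IsSubperm P)
    (h1 : ∀ i j : Fin (n+1), Hss a' b i j = (j : ℕ) - (i : ℕ) - distSum P' i j)
    (h2 : ∀ i j : Fin (n+1), Hss a'' b i j = (j : ℕ) - (i : ℕ) - distSum P'' i j)
    (h3 : ∀ i j : Fin (n+1), Hss (a' ++ a'') b i j = (j : ℕ) - (i : ℕ) - distSum P i j) :
    ∀ i k : Fin (n+1), distProd (distSum P') (distSum P'') i k = distSum P i k :=
  seaweed_composition_general a' a'' b P' P'' P h1 h2 h3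
end
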